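/- There exists a universal constant C̃ > 0 such that for every 0 < μ ≤ L, every f ∈ S_{μ,L} with minimizer x⋆, and every starting point x₀ ≠ x⋆, the speed restarting time of the solution X of the ODE Ẍ + (3/t)Ẋ + ∇f(X) = 0 with X(0) = x₀, Ẋ(0) = 0 satisfies T(x₀; f) ≤ (4/(5√L)) · exp(C̃ · L/μ). -/

import Mathlib

open Set Filter Topology

noncomputable section

abbrev E (n : ℕ) := EuclideanSpace ℝ (Fin n)

def MemFL (n : ℕ) (L : ℝ) (f : E n → ℝ) : Prop :=
  ConvexOn ℝ Set.univ f ∧ ContDiff ℝ 1 f ∧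
    ∀ x y, ‖gradient f x - gradient f y‖ ≤ L * ‖x - y‖

/-- The class `S_{μ,L}`: members of `F_L` such that `f(x) - μ‖x‖²/2` is convex. -/
def MemS (n : ℕ) (μ L : ℝ) (f : E n → ℝ) : Prop :=
  MemFL n L f ∧ ConvexOn ℝ Set.univ (fun x => f x - μ / 2 * ‖x‖ ^ 2)

def NesterovSol (n : ℕ) (f : E n → ℝ) (x0 : E n) (X : ℝ → E n) : Prop :=
  X 0 = x0 ∧
  ContDiffOn ℝ 1 X (Set.Ici 0) ∧
  ContDiffOn ℝ 2 X (Set.Ioi 0) ∧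
  derivWithin X (Set.Ici 0) 0 = 0 ∧
  ∀ t > (0:ℝ), deriv (deriv X) t + (3 / t) • deriv X t + gradient f (X t) = 0

/-- The speed restarting time of a trajectory `X`. -/
def SpeedRestartTime (n : ℕ) (X : ℝ → E n) : ℝ :=
  sSup {t : ℝ | 0 < t ∧ ∀ u ∈ Set.Ioo (0:ℝ) t, 0 < deriv (fun v => ‖deriv X v‖ ^ 2) u}

/-! Let `τ = 4 / (5 √L)` and suppose the speed `‖Ẋ‖` increases on `(0, t)` with `t > τ`.
On `[0, τ]` the speed is at most `v = ‖Ẋ(τ)‖`, so `X` stays within `v s` of `x₀` and `∇f(X(s))`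
within `L v s` of `∇f(x₀)`; integrating `(s³ Ẋ)' = -s³ ∇f(X)` over `[0, τ]` then gives
`τ ‖∇f(x₀)‖ ≲ v`. On `[τ, t]` the speed is at least `v`, so the energy `f(X) + ‖Ẋ‖² / 2`, whose
derivative is `-(3/s) ‖Ẋ‖²`, drops by at least `3 v² log(t/τ)`. It can drop by at most
`f(x₀) - f(x⋆) ≤ ‖∇f(x₀)‖² / (2μ) ≲ L v² / μ`, hence `log(t/τ) ≲ L/μ`. -/

open MeasureTheory
open scoped RealInnerProductSpace

theorem ConvexOn.add_fderiv_sub_le {F : Type*} [NormedAddCommGroup F] [NormedSpace ℝ F]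
    {g : F → ℝ} {g' : F →L[ℝ] ℝ} {a : F} (hg : ConvexOn ℝ univ g) (hd : HasFDerivAt g g' a)
    (b : F) : g a + g' (b - a) ≤ g b := by
  let ℓ : ℝ →ᵃ[ℝ] F := AffineMap.lineMap a b
  have hline : ConvexOn ℝ univ (g ∘ ℓ) := hg.comp_affineMap ℓ
  have hderiv : HasDerivAt (g ∘ ℓ) (g' (b - a)) 0 := by
    have hℓ : HasDerivAt ℓ (b - a) 0 := AffineMap.hasDerivAt_lineMap
    have hd' : HasFDerivAt g g' (ℓ 0) := by simpa [ℓ] using hd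
    exact hd'.comp_hasDerivAt 0 hℓ
  have hslope := hline.le_slope_of_hasDerivAt (mem_univ 0) (mem_univ 1) one_pos hderiv
  simp only [slope_def_field, Function.comp_apply, ℓ, AffineMap.lineMap_apply_zero,
    AffineMap.lineMap_apply_one, sub_zero, div_one] at hslope
  linarith

section StrongConvexity

variable {F : Type*} [NormedAddCommGroup F] [InnerProductSpace ℝ F] [CompleteSpace F]

theorem add_inner_add_sq_le_of_convexOn_sub_sq {f : F → ℝ} {μ : ℝ} {a b grad : F}
    (hconv : ConvexOn ℝ univ fun x => f x - μ / 2 * ‖x‖ ^ 2) (hf : HasGradientAt f grad a) :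
    f a + ⟪grad, b - a⟫ + μ / 2 * ‖b - a‖ ^ 2 ≤ f b := by
  have hd := hf.hasFDerivAt.sub ((hasStrictFDerivAt_norm_sq a).hasFDerivAt.const_mul (μ / 2))
  have hfirst := hconv.add_fderiv_sub_le hd b
  have hb : ‖b‖ ^ 2 = ‖a‖ ^ 2 + 2 * ⟪a, b - a⟫ + ‖b - a‖ ^ 2 := by
    rw [← norm_add_sq_real, add_sub_cancel]
  simp only [sub_apply, InnerProductSpace.toDual_apply_apply, smul_apply, coe_innerSL_apply,
    nsmul_eq_mul, Nat.cast_ofNat, smul_eq_mul, hb] at hfirst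
  linarith

theorem two_mul_sub_le_norm_sq_of_isMinOn {f : F → ℝ} {μ : ℝ} {x xstar grad : F} (hμ : 0 < μ)
    (hconv : ConvexOn ℝ univ fun x => f x - μ / 2 * ‖x‖ ^ 2) (hf : HasGradientAt f grad x)
    (hmin : IsMinOn f univ xstar) : 2 * μ * (f x - f xstar) ≤ ‖grad‖ ^ 2 := by
  have hstrong := add_inner_add_sq_le_of_convexOn_sub_sq (b := xstar) hconv hf
  have hcs := neg_le_of_abs_le (abs_real_inner_le_norm grad (xstar - x))
  have hmin' := hmin (mem_univ x)
  nlinarith [sq_nonneg (‖grad‖ - μ * ‖xstar - x‖)]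

end StrongConvexity

section Integral

variable {F : Type*} [NormedAddCommGroup F] [NormedSpace ℝ F] [CompleteSpace F]

theorem norm_integral_pow_smul_sub_le {g : ℝ → F} {g₀ : F} {K τ : ℝ} (k : ℕ) (hτ : 0 ≤ τ)
    (hg : ContinuousOn g (Icc 0 τ)) (hK : ∀ s ∈ Icc 0 τ, ‖g s - g₀‖ ≤ K * s) :
    ‖(∫ s in 0..τ, s ^ k • g s) - (τ ^ (k + 1) / (k + 1)) • g₀‖ ≤ K * τ ^ (k + 2) / (k + 2) := by
  have hmain : ∫ s in 0..τ, s ^ k • g₀ = (τ ^ (k + 1) / (k + 1)) • g₀ := by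
    simp [intervalIntegral.integral_smul_const, integral_pow]
  have hcont : ContinuousOn (fun s : ℝ => s ^ k • g s) (uIcc 0 τ) := by
    rw [uIcc_of_le hτ]; exact (continuousOn_pow k).smul hg
  rw [← hmain, ← intervalIntegral.integral_sub hcont.intervalIntegrable
    ((by fun_prop : Continuous fun s : ℝ => s ^ k • g₀).intervalIntegrable _ _)]
  calc ‖∫ s in 0..τ, s ^ k • g s - s ^ k • g₀‖ ≤ ∫ s in 0..τ, K * s ^ (k + 1) := by
        refine intervalIntegral.norm_integral_le_of_norm_le hτ (ae_of_all _ fun s hs => ?_)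
          ((by fun_prop : Continuous fun s : ℝ => K * s ^ (k + 1)).intervalIntegrable _ _)
        have hs0 : 0 ≤ s ^ k := pow_nonneg hs.1.le k
        calc ‖s ^ k • g s - s ^ k • g₀‖ = s ^ k * ‖g s - g₀‖ := by
              rw [← smul_sub, norm_smul, Real.norm_of_nonneg hs0]
          _ ≤ s ^ k * (K * s) := by gcongr; exact hK s (Ioc_subset_Icc_self hs)
          _ = K * s ^ (k + 1) := by ring
    _ = K * τ ^ (k + 2) / (k + 2) := by
        rw [intervalIntegral.integral_const_mul, integral_pow]; push_cast; ring

end Integral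

/-- Uses the one-sided derivative, so that the energy is continuous at `0`, where `deriv X 0`
carries no information about `X`. -/
def nesterovEnergy {n : ℕ} (f : E n → ℝ) (X : ℝ → E n) (s : ℝ) : ℝ :=
  f (X s) + ‖derivWithin X (Ici 0) s‖ ^ 2 / 2

namespace NesterovSol

variable {n : ℕ} {f : E n → ℝ} {x0 : E n} {X : ℝ → E n} {s τ t : ℝ}

theorem continuousOn (hX : NesterovSol n f x0 X) : ContinuousOn X (Ici 0) := by
  obtain ⟨-, hC1, -, -, -⟩ := hX
  exact hC1.continuousOn

theorem continuousOn_derivWithin (hX : NesterovSol n f x0 X) :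
    ContinuousOn (derivWithin X (Ici 0)) (Ici 0) := by
  obtain ⟨-, hC1, -, -, -⟩ := hX
  exact hC1.continuousOn_derivWithin (uniqueDiffOn_Ici 0) le_rfl

theorem hasDerivAt (hX : NesterovSol n f x0 X) (hs : 0 < s) : HasDerivAt X (deriv X s) s := by
  obtain ⟨-, -, hC2, -, -⟩ := hX
  exact ((hC2.differentiableOn (by norm_num)).differentiableAt (Ioi_mem_nhds hs)).hasDerivAt

theorem hasDerivAt_deriv (hX : NesterovSol n f x0 X) (hs : 0 < s) :
    HasDerivAt (deriv X) (deriv (deriv X) s) s := by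
  obtain ⟨-, -, hC2, -, -⟩ := hX
  have hC1 := hC2.deriv_of_isOpen isOpen_Ioi (m := 1) (by norm_num)
  exact ((hC1.differentiableOn one_ne_zero).differentiableAt (Ioi_mem_nhds hs)).hasDerivAt

theorem deriv_deriv_eq (hX : NesterovSol n f x0 X) (hs : 0 < s) :
    deriv (deriv X) s = -((3 / s) • deriv X s + gradient f (X s)) := by
  obtain ⟨-, -, -, -, hode⟩ := hX
  exact eq_neg_of_add_eq_zero_left (by rw [← add_assoc]; exact hode s hs)

theorem hasDerivAt_energy (hX : NesterovSol n f x0 X) (hf : Differentiable ℝ f) (hs : 0 < s) :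
    HasDerivAt (nesterovEnergy f X) (-(3 / s) * ‖deriv X s‖ ^ 2) s := by
  have hpot : HasDerivAt (f ∘ X) ⟪gradient f (X s), deriv X s⟫ s :=
    (hf (X s)).hasGradientAt.hasFDerivAt.comp_hasDerivAt s (hX.hasDerivAt hs)
  have hkin := ((hX.hasDerivAt_deriv hs).norm_sq).div_const 2
  have heq : (fun r => f (X r) + ‖deriv X r‖ ^ 2 / 2) =ᶠ[𝓝 s] nesterovEnergy f X := by
    filter_upwards [Ioi_mem_nhds hs] with r hr
    rw [nesterovEnergy, derivWithin_of_mem_nhds (Ici_mem_nhds hr)]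
  refine (hpot.add hkin).congr_of_eventuallyEq heq.symm |>.congr_deriv ?_
  rw [hX.deriv_deriv_eq hs, inner_neg_right, inner_add_right, real_inner_smul_right,
    real_inner_self_eq_norm_sq, real_inner_comm]
  ring

theorem continuousOn_energy (hX : NesterovSol n f x0 X) (hf : Continuous f) :
    ContinuousOn (nesterovEnergy f X) (Ici 0) :=
  (hf.comp_continuousOn hX.continuousOn).add
    ((hX.continuousOn_derivWithin.norm.pow 2).div_const 2)

theorem energy_zero (hX : NesterovSol n f x0 X) : nesterovEnergy f X 0 = f x0 := by
  obtain ⟨hX0, -, -, hV0, -⟩ := hX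
  simp [nesterovEnergy, hX0, hV0]

theorem energy_le (hX : NesterovSol n f x0 X) (hf : ContDiff ℝ 1 f) (hs : 0 ≤ s) :
    nesterovEnergy f X s ≤ f x0 := by
  have hanti : AntitoneOn (nesterovEnergy f X) (Ici 0) := by
    refine antitoneOn_of_hasDerivWithinAt_nonpos (convex_Ici 0)
      (hX.continuousOn_energy hf.continuous) (fun r hr => ?_) (fun r hr => ?_)
      (f' := fun r => -(3 / r) * ‖deriv X r‖ ^ 2)
    · rw [interior_Ici] at hr
      exact (hX.hasDerivAt_energy (hf.differentiable one_ne_zero) hr).hasDerivWithinAt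
    · rw [interior_Ici] at hr
      exact mul_nonpos_of_nonpos_of_nonneg (neg_nonpos.2 (div_pos three_pos hr).le) (by positivity)
  simpa [hX.energy_zero] using hanti self_mem_Ici hs hs

theorem antitoneOn_energy_add_log (hX : NesterovSol n f x0 X) (hf : ContDiff ℝ 1 f) {c : ℝ}
    (hτ : 0 < τ) (hc : ∀ s ∈ Ioo τ t, c ≤ ‖deriv X s‖ ^ 2) :
    AntitoneOn (fun s => nesterovEnergy f X s + 3 * c * Real.log s) (Icc τ t) := by
  have hpos : ∀ s ∈ Icc τ t, 0 < s := fun s hs => hτ.trans_le hs.1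
  refine antitoneOn_of_hasDerivWithinAt_nonpos (convex_Icc τ t) ?_ (fun s hs => ?_)
    (fun s hs => ?_) (f' := fun s => -(3 / s) * ‖deriv X s‖ ^ 2 + 3 * c * s⁻¹)
  · exact ((hX.continuousOn_energy hf.continuous).mono fun s hs => (hpos s hs).le).add
      (continuousOn_const.mul (Real.continuousOn_log.mono fun s hs => (hpos s hs).ne'))
  · rw [interior_Icc] at hs
    have hs0 := hτ.trans hs.1
    exact ((hX.hasDerivAt_energy (hf.differentiable one_ne_zero) hs0).add
      ((Real.hasDerivAt_log hs0.ne').const_mul _)).hasDerivWithinAt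
  · rw [interior_Icc] at hs
    have hs0 := hτ.trans hs.1
    have hfactor : -(3 / s) * ‖deriv X s‖ ^ 2 + 3 * c * s⁻¹ = 3 / s * (c - ‖deriv X s‖ ^ 2) := by
      ring
    rw [hfactor]
    exact mul_nonpos_of_nonneg_of_nonpos (by positivity) (sub_nonpos.2 (hc s hs))

theorem mul_log_le (hX : NesterovSol n f x0 X) (hf : ContDiff ℝ 1 f) {c : ℝ} {xstar : E n}
    (hmin : IsMinOn f univ xstar) (hτ : 0 < τ) (hτt : τ ≤ t)
    (hc : ∀ s ∈ Ioo τ t, c ≤ ‖deriv X s‖ ^ 2) :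
    3 * c * Real.log (t / τ) ≤ f x0 - f xstar := by
  have hdecay := hX.antitoneOn_energy_add_log hf hτ hc (left_mem_Icc.2 hτt)
    (right_mem_Icc.2 hτt) hτt
  have henergy_τ := hX.energy_le hf hτ.le
  have henergy_t : f xstar ≤ nesterovEnergy f X t :=
    (hmin (mem_univ (X t))).trans (le_add_of_nonneg_right (by positivity))
  rw [Real.log_div (hτ.trans_le hτt).ne' hτ.ne']
  linarith

theorem hasDerivAt_cube_smul_deriv (hX : NesterovSol n f x0 X) (hs : 0 < s) :
    HasDerivAt (fun r => r ^ 3 • deriv X r) (-(s ^ 3 • gradient f (X s))) s := by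
  refine ((hasDerivAt_pow 3 s).smul (hX.hasDerivAt_deriv hs)).congr_deriv ?_
  have hs3 : s ^ 3 * (3 / s) = ((3 : ℕ) : ℝ) * s ^ (3 - 1) := by field_simp; push_cast; ring
  rw [hX.deriv_deriv_eq hs, smul_neg, smul_add, smul_smul, hs3]
  abel

theorem integral_cube_smul_gradient (hX : NesterovSol n f x0 X) (hg : Continuous (gradient f))
    (hτ : 0 < τ) : ∫ s in 0..τ, s ^ 3 • gradient f (X s) = -(τ ^ 3 • deriv X τ) := by
  have hcont : ContinuousOn (fun s => -(s ^ 3 • derivWithin X (Ici 0) s)) (Icc 0 τ) :=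
    ((continuousOn_pow 3).smul (hX.continuousOn_derivWithin.mono Icc_subset_Ici_self)).neg
  have hderiv : ∀ s ∈ Ioo 0 τ, HasDerivAt (fun s => -(s ^ 3 • derivWithin X (Ici 0) s))
      (s ^ 3 • gradient f (X s)) s := by
    intro s hs
    refine (hX.hasDerivAt_cube_smul_deriv hs.1).neg.congr_of_eventuallyEq ?_ |>.congr_deriv
      (neg_neg _)
    filter_upwards [Ioi_mem_nhds hs.1] with r hr
    rw [derivWithin_of_mem_nhds (Ici_mem_nhds hr)]
    rfl
  have hint : IntervalIntegrable (fun s => s ^ 3 • gradient f (X s)) volume 0 τ := by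
    refine ContinuousOn.intervalIntegrable ?_
    rw [uIcc_of_le hτ.le]
    exact (continuousOn_pow 3).smul (hg.comp_continuousOn
      (hX.continuousOn.mono Icc_subset_Ici_self))
  rw [intervalIntegral.integral_eq_sub_of_hasDerivAt_of_le hτ.le hcont hderiv hint]
  simp [derivWithin_of_mem_nhds (Ici_mem_nhds hτ)]

theorem norm_sub_le_mul (hX : NesterovSol n f x0 X) {v : ℝ} (hv0 : 0 ≤ v)
    (hv : ∀ s ∈ Ioo 0 τ, ‖deriv X s‖ ≤ v) : ∀ s ∈ Icc 0 τ, ‖X s - x0‖ ≤ v * s := by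
  obtain ⟨hX0, hC1, -, hV0, -⟩ := hX
  have hderiv : ∀ r ∈ Ico 0 τ, HasDerivWithinAt X (derivWithin X (Ici 0) r) (Ici r) r :=
    fun r hr => ((hC1.differentiableOn one_ne_zero r hr.1).hasDerivWithinAt).mono
      (Ici_subset_Ici.2 hr.1)
  have hbound : ∀ r ∈ Ico 0 τ, ‖derivWithin X (Ici 0) r‖ ≤ v := by
    rintro r ⟨hr0, hrτ⟩
    rcases hr0.eq_or_lt with rfl | hr0
    · simpa [hV0] using hv0
    · rw [derivWithin_of_mem_nhds (Ici_mem_nhds hr0)]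
      exact hv r ⟨hr0, hrτ⟩
  simpa [hX0] using norm_image_sub_le_of_norm_deriv_right_le_segment
    (hC1.continuousOn.mono Icc_subset_Ici_self) hderiv hbound

theorem mul_norm_gradient_le (hX : NesterovSol n f x0 X) (hg : Continuous (gradient f)) {L : ℝ}
    (hL : 0 ≤ L) (hLip : ∀ x y, ‖gradient f x - gradient f y‖ ≤ L * ‖x - y‖) (hτ : 0 < τ)
    (hv : ∀ s ∈ Ioo 0 τ, ‖deriv X s‖ ≤ ‖deriv X τ‖) :
    τ * ‖gradient f x0‖ ≤ 4 * (1 + L * τ ^ 2 / 5) * ‖deriv X τ‖ := by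
  set v := ‖deriv X τ‖
  have hK : ∀ s ∈ Icc 0 τ, ‖gradient f (X s) - gradient f x0‖ ≤ L * v * s := fun s hs =>
    calc ‖gradient f (X s) - gradient f x0‖ ≤ L * ‖X s - x0‖ := hLip _ _
      _ ≤ L * (v * s) := by gcongr; exact hX.norm_sub_le_mul (norm_nonneg _) hv s hs
      _ = L * v * s := by ring
  have hest := norm_integral_pow_smul_sub_le (g := fun s => gradient f (X s)) 3 hτ.le
    (hg.comp_continuousOn (hX.continuousOn.mono Icc_subset_Ici_self)) hK
  rw [hX.integral_cube_smul_gradient hg hτ, ← norm_neg, neg_sub, sub_neg_eq_add] at hest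
  have htri := norm_le_add_norm_add ((τ ^ (3 + 1) / (3 + 1)) • gradient f x0) (τ ^ 3 • deriv X τ)
  rw [norm_smul, norm_smul, Real.norm_of_nonneg (by positivity),
    Real.norm_of_nonneg (by positivity)] at htri
  refine le_of_mul_le_mul_left ?_ (pow_pos hτ 3)
  norm_num at hest htri
  linarith

theorem strictMonoOn_speed (hX : NesterovSol n f x0 X)
    (hder : ∀ u ∈ Ioo 0 t, 0 < deriv (fun v => ‖deriv X v‖ ^ 2) u) :
    StrictMonoOn (fun u => ‖deriv X u‖ ^ 2) (Ioo 0 t) :=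
  strictMonoOn_of_deriv_pos (convex_Ioo 0 t)
    (fun u hu => ((hX.hasDerivAt_deriv hu.1).continuousAt.norm.pow 2).continuousWithinAt)
    (by rwa [interior_Ioo])

theorem log_div_le_of_strictMonoOn (hX : NesterovSol n f x0 X) {μ L : ℝ} (hf : MemS n μ L f)
    (hμ : 0 < μ) (hμL : μ ≤ L) {xstar : E n} (hmin : IsMinOn f univ xstar)
    (hmono : StrictMonoOn (fun u => ‖deriv X u‖ ^ 2) (Ioo 0 t)) {t' : ℝ}
    (hτt' : 4 / (5 * Real.sqrt L) < t') (ht' : t' < t) :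
    Real.log (t' / (4 / (5 * Real.sqrt L))) ≤ 6 * L / μ := by
  obtain ⟨⟨-, hC1, hLip⟩, hconv⟩ := hf
  have hL : 0 < L := hμ.trans_le hμL
  set τ := 4 / (5 * Real.sqrt L)
  have hτ : 0 < τ := by positivity
  have hLτ : L * τ ^ 2 = 16 / 25 := by
    rw [div_pow, mul_pow, Real.sq_sqrt hL.le]; field_simp; norm_num
  have hτt : τ < t := hτt'.trans ht'
  set v := ‖deriv X τ‖
  have hspeed_le : ∀ s ∈ Ioo 0 τ, ‖deriv X s‖ ≤ v := fun s hs =>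
    (pow_le_pow_iff_left₀ (norm_nonneg _) (norm_nonneg _) two_ne_zero).1
      (hmono.monotoneOn ⟨hs.1, hs.2.trans hτt⟩ ⟨hτ, hτt⟩ hs.2.le)
  have hspeed_ge : ∀ s ∈ Ioo τ t', v ^ 2 ≤ ‖deriv X s‖ ^ 2 := fun s hs =>
    hmono.monotoneOn ⟨hτ, hτt⟩ ⟨hτ.trans hs.1, hs.2.trans ht'⟩ hs.1.le
  have hv : 0 < v ^ 2 := (sq_nonneg _).trans_lt
    (hmono ⟨half_pos hτ, (half_lt_self hτ).trans hτt⟩ ⟨hτ, hτt⟩ (half_lt_self hτ))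
  have hgrad : Continuous (gradient f) :=
    (LipschitzWith.of_dist_le_mul (K := L.toNNReal) fun x y => by
      simpa [dist_eq_norm, hL.le] using hLip x y).continuous
  have hvel := hX.mul_norm_gradient_le hgrad hL.le hLip hτ hspeed_le
  have hPL := two_mul_sub_le_norm_sq_of_isMinOn hμ hconv
    ((hC1.differentiable one_ne_zero) x0).hasGradientAt hmin
  have hdecay := hX.mul_log_le hC1 hmin hτ hτt'.le hspeed_ge
  -- `1 + (16 / 25) / 5 = 141 / 125` and `(4 * 141 / 125) ^ 2 * 25 / 16 < 32`
  have hg : ‖gradient f x0‖ ^ 2 ≤ 32 * L * v ^ 2 := by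
    rw [hLτ] at hvel
    have hsq := pow_le_pow_left₀ (by positivity) hvel 2
    nlinarith [mul_le_mul_of_nonneg_left hsq hL.le]
  rw [le_div_iff₀ hμ]
  refine le_of_mul_le_mul_right ?_ hv
  nlinarith [mul_le_mul_of_nonneg_left hdecay hμ.le, mul_nonneg hL.le hv.le]

theorem le_mul_exp_of_strictMonoOn (hX : NesterovSol n f x0 X) {μ L : ℝ} (hf : MemS n μ L f)
    (hμ : 0 < μ) (hμL : μ ≤ L) {xstar : E n} (hmin : IsMinOn f univ xstar)
    (hmono : StrictMonoOn (fun u => ‖deriv X u‖ ^ 2) (Ioo 0 t)) {t' : ℝ} (ht' : t' < t) :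
    t' ≤ 4 / (5 * Real.sqrt L) * Real.exp (6 * L / μ) := by
  have hL : 0 < L := hμ.trans_le hμL
  have hlog := hX.log_div_le_of_strictMonoOn hf hμ hμL hmin hmono (t' := t')
  set τ := 4 / (5 * Real.sqrt L)
  have hτ : 0 < τ := by positivity
  rcases le_or_gt t' τ with ht'τ | hτt'
  · exact ht'τ.trans (le_mul_of_one_le_right hτ.le (Real.one_le_exp (by positivity)))
  calc t' = τ * Real.exp (Real.log (t' / τ)) := by
        rw [Real.exp_log (div_pos (hτ.trans hτt') hτ), mul_div_cancel₀ _ hτ.ne']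
    _ ≤ τ * Real.exp (6 * L / μ) := by gcongr; exact hlog hτt' ht'

end NesterovSol

/-- **Lemma (upper bound on the restarting time).** There is a universal constant `C̃ > 0`
such that for every `f ∈ S_{μ,L}` and `x₀ ≠ x⋆`, the speed restarting time of the Nesterov
ODE solution satisfies `T(x₀; f) ≤ (4/(5√L)) exp(C̃ L/μ)`. -/
theorem speed_restart_time_upper_bound :
    ∃ C > (0:ℝ), ∀ (n : ℕ) (μ L : ℝ), 0 < μ → μ ≤ L →
      ∀ f : E n → ℝ, MemS n μ L f →
      ∀ xstar : E n, IsMinOn f Set.univ xstar →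
      ∀ x0 : E n, x0 ≠ xstar →
      ∀ X : ℝ → E n, NesterovSol n f x0 X →
        SpeedRestartTime n X ≤ 4 / (5 * Real.sqrt L) * Real.exp (C * L / μ) := by
  refine ⟨6, by norm_num, fun n μ L hμ hμL f hf xstar hmin x0 _ X hX => ?_⟩
  refine Real.sSup_le (fun t ht => le_of_forall_lt_imp_le_of_dense fun t' ht' => ?_)
    (by positivity)
  exact hX.le_mul_exp_of_strictMonoOn hf hμ hμL hmin (hX.strictMonoOn_speed ht.2) ht'
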